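/- arXiv:2111.15484 — 2 statements merged into one kernel-verified Lean document; each statement's English description precedes it below -/
import Mathlib

section
/- For every positive integer n, the number of additive subgroups of ℤ × ℤ of index n equals σ(n), the sum of the positive divisors of n. -/
/-!
Every finite-index subgroup `H ≤ ℤ × ℤ` has a unique basis in Hermite normal form
`(a, b), (0, d)` with `a, d > 0` and `0 ≤ b < d`: `aℤ` is the projection of `H` to the first
factor, `dℤ` is its intersection with the second factor, and `b` is determined modulo `d`.
The index of `H` is `a * d`, so the subgroups of index `n` are counted by the triples with
`a * d = n` and `0 ≤ b < d`, of which there are `∑_{d ∣ n} d`.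
-/

open AddSubgroup

namespace AddSubgroup

theorem index_eq_index_map_fst_mul_index_comap_inr {G G' : Type*} [AddGroup G] [AddGroup G']
    (H : AddSubgroup (G × G')) [H.Normal] :
    H.index = (H.map (AddMonoidHom.fst G G')).index * (H.comap (AddMonoidHom.inr G G')).index := by
  set N := (AddMonoidHom.fst G G').ker
  have hN : N = (⊤ : AddSubgroup G').map (AddMonoidHom.inr G G') := by
    ext ⟨g, g'⟩; simp [N, AddSubgroup.mem_prod, eq_comm]
  have hfiber : H.relIndex (H ⊔ N) = (H.comap (AddMonoidHom.inr G G')).index := by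
    rw [sup_comm, relIndex_sup_right, hN, ← relIndex_comap, relIndex_top_right]
  have hbase : (H ⊔ N).index = (H.map (AddMonoidHom.fst G G')).index := by
    rw [← comap_map_eq, index_comap_of_surjective _ Prod.fst_surjective]
  rw [← relIndex_mul_index (le_sup_left : H ≤ H ⊔ N), hfiber, hbase, mul_comm]

end AddSubgroup

theorem Int.zmultiples_index (K : AddSubgroup ℤ) : zmultiples (K.index : ℤ) = K := by
  obtain ⟨a, rfl⟩ := Int.subgroup_cyclic K
  rw [← zmultiples_eq_closure, Int.index_zmultiples, Int.zmultiples_natAbs]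

def hermiteLattice (a b d : ℤ) : AddSubgroup (ℤ × ℤ) := closure {(a, b), (0, d)}

section hermiteLattice

variable {a b d : ℤ}

theorem mem_hermiteLattice {p : ℤ × ℤ} :
    p ∈ hermiteLattice a b d ↔ ∃ k m : ℤ, (k * a, k * b + m * d) = p := by
  simp [hermiteLattice, mem_closure_pair]

theorem map_fst_hermiteLattice :
    (hermiteLattice a b d).map (AddMonoidHom.fst ℤ ℤ) = zmultiples a := by
  ext x
  simp [mem_hermiteLattice, Int.mem_zmultiples_iff, dvd_iff_exists_eq_mul_left, eq_comm]

theorem comap_inr_hermiteLattice (ha : a ≠ 0) :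
    (hermiteLattice a b d).comap (AddMonoidHom.inr ℤ ℤ) = zmultiples d := by
  ext y
  simp [mem_hermiteLattice, Int.mem_zmultiples_iff, ha, dvd_iff_exists_eq_mul_left, eq_comm]

theorem index_hermiteLattice (ha : a ≠ 0) :
    (hermiteLattice a b d).index = a.natAbs * d.natAbs := by
  rw [index_eq_index_map_fst_mul_index_comap_inr, map_fst_hermiteLattice,
    comap_inr_hermiteLattice ha, Int.index_zmultiples, Int.index_zmultiples]

theorem eq_hermiteLattice {H : AddSubgroup (ℤ × ℤ)} (hab : (a, b) ∈ H)
    (hfst : H.map (AddMonoidHom.fst ℤ ℤ) = zmultiples a)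
    (hinr : H.comap (AddMonoidHom.inr ℤ ℤ) = zmultiples d) :
    H = hermiteLattice a b d := by
  have hd : ((0 : ℤ), d) ∈ H := by
    simpa using hinr.ge (mem_zmultiples d)
  refine le_antisymm ?_ ?_
  · rintro ⟨x, y⟩ hxy
    obtain ⟨k, rfl⟩ : a ∣ x := by
      rw [← Int.mem_zmultiples_iff, ← hfst]
      exact mem_map_of_mem _ hxy
    obtain ⟨m, hm⟩ : d ∣ y - k * b := by
      rw [← Int.mem_zmultiples_iff, ← hinr, mem_comap]
      convert H.sub_mem hxy (H.zsmul_mem hab k) using 1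
      simp [mul_comm]
    exact mem_hermiteLattice.mpr ⟨k, m, by simp only [Prod.mk.injEq]; constructor <;> linarith⟩
  · rw [hermiteLattice, closure_le]
    simp [Set.insert_subset_iff, hab, hd]

theorem hermiteLattice_eq_hermiteLattice_iff {b' : ℤ} (ha : a ≠ 0) :
    hermiteLattice a b d = hermiteLattice a b' d ↔ b ≡ b' [ZMOD d] := by
  rw [Int.modEq_iff_dvd]
  constructor
  · intro h
    have hb : (a, b) ∈ hermiteLattice a b d := mem_hermiteLattice.mpr ⟨1, 0, by simp⟩
    have hb' : (a, b') ∈ hermiteLattice a b d := h ▸ mem_hermiteLattice.mpr ⟨1, 0, by simp⟩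
    rw [← Int.mem_zmultiples_iff, ← comap_inr_hermiteLattice (b := b) ha, mem_comap]
    convert sub_mem hb' hb using 1
    simp
  · rintro ⟨m, hm⟩
    refine eq_hermiteLattice ?_ map_fst_hermiteLattice (comap_inr_hermiteLattice ha)
    exact mem_hermiteLattice.mpr ⟨1, m, by simp only [Prod.mk.injEq]; constructor <;> linarith⟩

end hermiteLattice

theorem exists_eq_hermiteLattice (H : AddSubgroup (ℤ × ℤ)) (hH : H.index ≠ 0) :
    ∃ b ∈ Finset.Ico 0 ((H.comap (AddMonoidHom.inr ℤ ℤ)).index : ℤ),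
      H = hermiteLattice (H.map (AddMonoidHom.fst ℤ ℤ)).index b
        (H.comap (AddMonoidHom.inr ℤ ℤ)).index := by
  set a := (H.map (AddMonoidHom.fst ℤ ℤ)).index
  set d := (H.comap (AddMonoidHom.inr ℤ ℤ)).index
  obtain ⟨ha, hd⟩ : a ≠ 0 ∧ d ≠ 0 := by
    rwa [index_eq_index_map_fst_mul_index_comap_inr, mul_ne_zero_iff] at hH
  obtain ⟨⟨x, b⟩, hxb, rfl⟩ : (a : ℤ) ∈ H.map (AddMonoidHom.fst ℤ ℤ) := by
    rw [← Int.zmultiples_index (H.map _)]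
    exact mem_zmultiples _
  have hdz : (0 : ℤ) < d := by omega
  have hH : H = hermiteLattice a b d :=
    eq_hermiteLattice hxb (Int.zmultiples_index _).symm (Int.zmultiples_index _).symm
  have hreduce : hermiteLattice a b d = hermiteLattice a (b % d) d :=
    (hermiteLattice_eq_hermiteLattice_iff (Int.natCast_ne_zero.mpr ha)).mpr (Int.mod_modEq b d).symm
  exact ⟨b % d, Finset.mem_Ico.mpr ⟨Int.emod_nonneg b hdz.ne', Int.emod_lt_of_pos b hdz⟩,
    hH.trans hreduce⟩

noncomputable def hermiteParams (n : ℕ) : Finset (Σ _ : ℕ × ℕ, ℤ) :=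
  n.divisorsAntidiagonal.sigma fun ad => Finset.Ico 0 (ad.2 : ℤ)

def hermiteLatticeOfParams (x : Σ _ : ℕ × ℕ, ℤ) : AddSubgroup (ℤ × ℤ) :=
  hermiteLattice x.1.1 x.2 x.1.2

theorem card_hermiteParams (n : ℕ) : (hermiteParams n).card = ∑ d ∈ n.divisors, d := by
  simp [hermiteParams, Nat.sum_divisorsAntidiagonal' fun _ d => d]

theorem image_hermiteLatticeOfParams {n : ℕ} (hn : n ≠ 0) :
    hermiteLatticeOfParams '' hermiteParams n = {H | H.index = n} := by
  ext H
  simp only [Set.mem_image, Finset.mem_coe, Set.mem_ofPred_eq]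
  constructor
  · rintro ⟨⟨⟨a, d⟩, b⟩, hx, rfl⟩
    obtain ⟨⟨had, -⟩, -⟩ := by simpa [hermiteParams] using hx
    have ha : (a : ℤ) ≠ 0 := Int.natCast_ne_zero.mpr (left_ne_zero_of_mul (by rwa [had]))
    rw [hermiteLatticeOfParams, index_hermiteLattice ha, Int.natAbs_natCast, Int.natAbs_natCast,
      had]
  · intro hH
    obtain ⟨b, hb, hHb⟩ := exists_eq_hermiteLattice H (hH ▸ hn)
    have hmem : (_, _) ∈ n.divisorsAntidiagonal := Nat.mem_divisorsAntidiagonal.mpr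
      ⟨(index_eq_index_map_fst_mul_index_comap_inr H).symm.trans hH, hn⟩
    exact ⟨⟨_, b⟩, Finset.mem_sigma.mpr ⟨hmem, hb⟩, hHb.symm⟩

theorem injOn_hermiteLatticeOfParams (n : ℕ) :
    Set.InjOn hermiteLatticeOfParams (hermiteParams n) := by
  rintro ⟨⟨a, d⟩, b⟩ hx ⟨⟨a', d'⟩, b'⟩ hx' h
  simp only [hermiteParams, Finset.coe_sigma, Set.mem_sigma_iff, Finset.mem_coe,
    Nat.mem_divisorsAntidiagonal, Finset.mem_Ico] at hx hx'
  obtain ⟨⟨had, hn⟩, hb0, hbd⟩ := hx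
  obtain ⟨-, hb0', hbd'⟩ := hx'
  have ha : (a : ℤ) ≠ 0 := Int.natCast_ne_zero.mpr (left_ne_zero_of_mul (by rwa [had]))
  obtain rfl : a = a' := by
    simpa [hermiteLatticeOfParams, map_fst_hermiteLattice, Int.index_zmultiples]
      using congrArg (fun H => (H.map (AddMonoidHom.fst ℤ ℤ)).index) h
  obtain rfl : d = d' := by
    simpa [hermiteLatticeOfParams, comap_inr_hermiteLattice ha, Int.index_zmultiples]
      using congrArg (fun H => (H.comap (AddMonoidHom.inr ℤ ℤ)).index) h
  have hbb : b % d = b' % d := (hermiteLattice_eq_hermiteLattice_iff ha).mp h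
  rw [Int.emod_eq_of_lt hb0 hbd, Int.emod_eq_of_lt hb0' hbd'] at hbb
  rw [hbb]

/-- **Counting sublattices of `ℤ × ℤ` of index `n`.** For every positive integer
`n`, the number of additive subgroups of `ℤ × ℤ` of index `n` equals
`σ(n) = ∑_{d ∣ n} d`, the sum of the positive divisors of `n`. -/
theorem stmt_3 (n : ℕ) (hn : 0 < n) :
    {H : AddSubgroup (ℤ × ℤ) | H.index = n}.ncard = ∑ d ∈ n.divisors, d := by
  rw [← image_hermiteLatticeOfParams hn.ne', (injOn_hermiteLatticeOfParams n).ncard_image,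
    Set.ncard_coe_finset, card_hermiteParams]
end

section
/- Let C and D be ℤ-linearly independent vectors in ℤ × ℤ and let K be the additive subgroup generated by C and D. For every positive integer n, the number of additive subgroups L of ℤ × ℤ with L ≤ K whose index in K equals n is exactly σ(n), the sum of the positive divisors of n. -/
/-!
The map `(a, b) ↦ a • C + b • D` is an isomorphism of `ℤ × ℤ` onto `K`, so it suffices to count
the subgroups of index `n` of `ℤ × ℤ`. Such a subgroup `H` has a Hermite normal form: its
projection to the first factor is `dℤ` and its intersection with the second factor is `aℤ`,
where `a * d = n`, and `H` is generated by `(d, b)` and `(0, a)` for a unique `0 ≤ b < a`.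
So there are `∑_{d ∣ n} n / d = σ(n)` of them.
-/

open AddSubgroup

theorem AddMonoidHom.range_coprod_zmultiplesHom {M : Type*} [AddCommGroup M] (C D : M) :
    ((zmultiplesHom M C).coprod (zmultiplesHom M D)).range = closure {C, D} := by
  ext x
  simp [mem_closure_pair]

theorem AddMonoidHom.injective_coprod_zmultiplesHom {M : Type*} [AddCommGroup M] {C D : M}
    (hCD : ∀ a b : ℤ, a • C + b • D = 0 → a = 0 ∧ b = 0) :
    Function.Injective ((zmultiplesHom M C).coprod (zmultiplesHom M D)) := by
  refine (injective_iff_map_eq_zero _).2 fun p hp => ?_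
  obtain ⟨h₁, h₂⟩ := hCD p.1 p.2 hp
  exact Prod.ext h₁ h₂

namespace AddSubgroup

theorem setOf_le_range_relIndex_eq_image_map {G M : Type*} [AddGroup G] [AddGroup M]
    {f : G →+ M} (hf : Function.Injective f) (n : ℕ) :
    {L : AddSubgroup M | L ≤ f.range ∧ L.relIndex f.range = n} = map f '' {H | H.index = n} := by
  ext L
  constructor
  · rintro ⟨hL, hLn⟩
    exact ⟨L.comap f, by rwa [Set.mem_ofPred_eq, index_comap], map_comap_eq_self hL⟩
  · rintro ⟨H, hH, rfl⟩
    refine ⟨map_le_range f H, ?_⟩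
    rwa [← index_comap, comap_map_eq_self_of_injective hf]

theorem index_eq_index_comap_inr_mul_index_map_fst {A B : Type*} [AddCommGroup A]
    [AddCommGroup B] (H : AddSubgroup (A × B)) :
    H.index = (H.comap (AddMonoidHom.inr A B)).index * (H.map (AddMonoidHom.fst A B)).index := by
  set N := (AddMonoidHom.fst A B).ker
  have hN : (⊤ : AddSubgroup B).map (AddMonoidHom.inr A B) = N := by
    ext ⟨x, y⟩
    simp [N, eq_comm, mem_prod]
  have hfst : (H.map (AddMonoidHom.fst A B)).index = (H ⊔ N).index := by
    rw [index_map, AddMonoidHom.range_eq_top.2 Prod.fst_surjective, index_top, mul_one]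
  have hinr : (H.comap (AddMonoidHom.inr A B)).index = H.relIndex (H ⊔ N) := by
    rw [sup_comm, relIndex_sup_right, ← hN, ← relIndex_comap, relIndex_top_right]
  rw [hfst, hinr, relIndex_mul_index le_sup_left]

theorem exists_eq_zmultiples_natCast (H : AddSubgroup ℤ) : ∃ k : ℕ, H = zmultiples (k : ℤ) := by
  obtain ⟨a, rfl⟩ := Int.subgroup_cyclic H
  exact ⟨a.natAbs, by rw [Int.zmultiples_natAbs, zmultiples_eq_closure]⟩

theorem index_zmultiples_natCast (k : ℕ) : (zmultiples (k : ℤ)).index = k := by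
  rw [Int.index_zmultiples, Int.natAbs_natCast]

end AddSubgroup

/-- The subgroup of `ℤ × ℤ` spanned by the rows of the Hermite normal form `!![d, b; 0, a]`. -/
def hermiteSubgroup (d b a : ℕ) : AddSubgroup (ℤ × ℤ) :=
  closure {((d : ℤ), (b : ℤ)), (0, (a : ℤ))}

section hermiteSubgroup

variable {d b a : ℕ}

theorem mem_hermiteSubgroup {p : ℤ × ℤ} :
    p ∈ hermiteSubgroup d b a ↔ ∃ s t : ℤ, s * d = p.1 ∧ s * b + t * a = p.2 := by
  simp [hermiteSubgroup, mem_closure_pair, Prod.ext_iff]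

theorem map_fst_hermiteSubgroup :
    (hermiteSubgroup d b a).map (AddMonoidHom.fst ℤ ℤ) = zmultiples (d : ℤ) := by
  ext x
  simp only [mem_map, mem_hermiteSubgroup, Int.mem_zmultiples_iff, AddMonoidHom.coe_fst]
  constructor
  · rintro ⟨p, ⟨s, t, hs, -⟩, rfl⟩
    exact ⟨s, by rw [← hs, mul_comm]⟩
  · rintro ⟨s, rfl⟩
    exact ⟨(d * s, s * b), ⟨s, 0, mul_comm _ _, by ring⟩, rfl⟩

theorem comap_inr_hermiteSubgroup (hd : d ≠ 0) :
    (hermiteSubgroup d b a).comap (AddMonoidHom.inr ℤ ℤ) = zmultiples (a : ℤ) := by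
  ext y
  simp only [mem_comap, AddMonoidHom.inr_apply, mem_hermiteSubgroup, Int.mem_zmultiples_iff]
  constructor
  · rintro ⟨s, t, hs, rfl⟩
    obtain rfl : s = 0 := by simpa [hd] using hs
    exact ⟨t, by ring⟩
  · rintro ⟨t, rfl⟩
    exact ⟨0, t, by ring, by ring⟩

theorem index_hermiteSubgroup (hd : d ≠ 0) : (hermiteSubgroup d b a).index = a * d := by
  rw [index_eq_index_comap_inr_mul_index_map_fst, comap_inr_hermiteSubgroup hd,
    map_fst_hermiteSubgroup, index_zmultiples_natCast, index_zmultiples_natCast]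

theorem hermiteSubgroup_inj {d' b' a' : ℕ} (hd : d ≠ 0) (hd' : d' ≠ 0) (hb : b < a)
    (hb' : b' < a') (h : hermiteSubgroup d b a = hermiteSubgroup d' b' a') :
    d = d' ∧ b = b' ∧ a = a' := by
  have hdd' : d = d' := by
    simpa only [map_fst_hermiteSubgroup, index_zmultiples_natCast] using
      congr_arg (fun H => (H.map (AddMonoidHom.fst ℤ ℤ)).index) h
  subst hdd'
  have haa' : a = a' := by
    simpa only [comap_inr_hermiteSubgroup hd, index_zmultiples_natCast] using
      congr_arg (fun H => (H.comap (AddMonoidHom.inr ℤ ℤ)).index) h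
  subst haa'
  have hdiff : ((0 : ℤ), (b : ℤ) - b') ∈ hermiteSubgroup d b a := by
    have hmem : ((d : ℤ), (b' : ℤ)) ∈ hermiteSubgroup d b a := h ▸ subset_closure (by simp)
    have hgen : ((d : ℤ), (b : ℤ)) ∈ hermiteSubgroup d b a := subset_closure (by simp)
    simpa using sub_mem hgen hmem
  have hdvd : (a : ℤ) ∣ b - b' := by
    rw [← Int.mem_zmultiples_iff, ← comap_inr_hermiteSubgroup hd]
    exact hdiff
  exact ⟨rfl, ((Nat.modEq_iff_dvd.2 hdvd).eq_of_lt_of_lt hb' hb).symm, rfl⟩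

end hermiteSubgroup

theorem exists_eq_hermiteSubgroup {H : AddSubgroup (ℤ × ℤ)} (hH : H.index ≠ 0) :
    ∃ d b a : ℕ, d ≠ 0 ∧ b < a ∧ H = hermiteSubgroup d b a := by
  obtain ⟨d, hd⟩ := exists_eq_zmultiples_natCast (H.map (AddMonoidHom.fst ℤ ℤ))
  obtain ⟨a, ha⟩ := exists_eq_zmultiples_natCast (H.comap (AddMonoidHom.inr ℤ ℤ))
  have hindex : H.index = a * d := by
    rw [index_eq_index_comap_inr_mul_index_map_fst, ha, hd, index_zmultiples_natCast,
      index_zmultiples_natCast]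
  have hd0 : d ≠ 0 := by rintro rfl; simp_all
  have ha0 : (0 : ℤ) < a := by
    have : a ≠ 0 := by rintro rfl; simp_all
    omega
  obtain ⟨⟨x, c⟩, hxc, rfl : x = d⟩ : (d : ℤ) ∈ H.map (AddMonoidHom.fst ℤ ℤ) :=
    hd ▸ mem_zmultiples _
  have haH : (a : ℤ) ∈ H.comap (AddMonoidHom.inr ℤ ℤ) := ha ▸ mem_zmultiples _
  rw [mem_comap, AddMonoidHom.inr_apply] at haH
  obtain ⟨b, hb⟩ := Int.eq_ofNat_of_zero_le (Int.emod_nonneg c ha0.ne')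
  have hba : b < a := by have := Int.emod_lt_of_pos c ha0; omega
  have hbH : ((d : ℤ), (b : ℤ)) ∈ H := by
    have hred := sub_mem hxc (zsmul_mem haH (c / a))
    rwa [show ((d : ℤ), c) - (c / a) • ((0 : ℤ), (a : ℤ)) = ((d : ℤ), (b : ℤ)) by
      simp [← hb, Int.emod_def, mul_comm]] at hred
  have hle : hermiteSubgroup d b a ≤ H := by
    rw [hermiteSubgroup, closure_le]
    rintro _ (rfl | rfl)
    exacts [hbH, haH]
  -- Both subgroups have index `a * d`.
  have hrel : (hermiteSubgroup d b a).relIndex H = 1 := by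
    have := relIndex_mul_index hle
    rw [index_hermiteSubgroup hd0, ← hindex] at this
    exact (Nat.mul_eq_right hH).1 this
  exact ⟨d, b, a, hd0, hba, le_antisymm (relIndex_eq_one.1 hrel) hle⟩

theorem setOf_index_eq_image_hermiteSubgroup {n : ℕ} (hn : n ≠ 0) :
    {H : AddSubgroup (ℤ × ℤ) | H.index = n} =
      (fun p : (_ : ℕ) × ℕ => hermiteSubgroup p.1 p.2 (n / p.1)) ''
        ↑(n.divisors.sigma fun d => Finset.range (n / d)) := by
  ext H
  simp only [Set.mem_ofPred_eq, Set.mem_image, Finset.coe_sigma, Set.mem_sigma_iff,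
    Finset.mem_coe, Nat.mem_divisors, Finset.mem_range, Sigma.exists]
  constructor
  · rintro rfl
    obtain ⟨d, b, a, hd, hba, rfl⟩ := exists_eq_hermiteSubgroup hn
    rw [index_hermiteSubgroup hd] at hn ⊢
    refine ⟨d, b, ⟨⟨Dvd.intro_left a rfl, hn⟩, ?_⟩, ?_⟩ <;>
      rw [Nat.mul_div_cancel _ (Nat.pos_of_ne_zero hd)]
    exact hba
  · rintro ⟨d, b, ⟨⟨hdn, -⟩, -⟩, rfl⟩
    rw [index_hermiteSubgroup (ne_zero_of_dvd_ne_zero hn hdn), Nat.div_mul_cancel hdn]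

theorem ncard_setOf_index_eq {n : ℕ} (hn : n ≠ 0) :
    {H : AddSubgroup (ℤ × ℤ) | H.index = n}.ncard = ∑ d ∈ n.divisors, d := by
  rw [setOf_index_eq_image_hermiteSubgroup hn, Set.InjOn.ncard_image, Set.ncard_coe_finset,
    Finset.card_sigma]
  · simpa using Nat.sum_div_divisors n id
  · rintro ⟨d, b⟩ hdb ⟨d', b'⟩ hdb' h
    simp only [Finset.coe_sigma, Set.mem_sigma_iff, Finset.mem_coe, Nat.mem_divisors,
      Finset.mem_range] at hdb hdb'
    obtain ⟨rfl, rfl, -⟩ := hermiteSubgroup_inj (ne_zero_of_dvd_ne_zero hn hdb.1.1)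
      (ne_zero_of_dvd_ne_zero hn hdb'.1.1) hdb.2 hdb'.2 h
    rfl

/-- **Counting sublattices of a rank-2 lattice.** Let `C, D ∈ ℤ × ℤ` be
`ℤ`-linearly independent and let `K` be the additive subgroup generated by
`C` and `D`. For every positive integer `n`, the number of additive subgroups
`L ≤ K` of `ℤ × ℤ` whose index in `K` equals `n` is exactly
`σ(n) = ∑_{d ∣ n} d`. -/
theorem stmt_8 (C D : ℤ × ℤ)
    (hCD : ∀ a b : ℤ, a • C + b • D = 0 → a = 0 ∧ b = 0)
    (n : ℕ) (hn : 0 < n) :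
    {L : AddSubgroup (ℤ × ℤ) | L ≤ AddSubgroup.closure {C, D} ∧
      L.relIndex (AddSubgroup.closure {C, D}) = n}.ncard = ∑ d ∈ n.divisors, d := by
  have hf := AddMonoidHom.injective_coprod_zmultiplesHom hCD
  rw [← AddMonoidHom.range_coprod_zmultiplesHom, setOf_le_range_relIndex_eq_image_map hf,
    (map_injective hf).injOn.ncard_image, ncard_setOf_index_eq hn.ne']
end
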